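/- If two nodes v_i, v_j of a graph are exchanged by a graph automorphism π (π(i) = j), then the multisets of wavelet coefficients {Ψ_{ri} : r ∈ V} and {Ψ_{rj} : r ∈ V} coincide, hence MDPA(Ψ_i, Ψ_j) = 0 and s(v_i, v_j) = e^0 = 1. -/

import Mathlib

/-- Minimum difference of pair assignments between two lists of reals indexed by a
finite type. -/
noncomputable def MDPA {V : Type*} [Fintype V] [DecidableEq V] (x y : V → ℝ) : ℝ :=
  Finset.univ.inf' Finset.univ_nonempty fun σ : Equiv.Perm V => ∑ r, |x r - y (σ r)|

/-!
An automorphism `π` of the graph fixes the Laplacian under simultaneous permutation of rows and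
columns, and simultaneous permutation is a continuous algebra automorphism of the matrix ring, so
it also fixes `Ψ = exp(-τL)`. Hence `Ψ (π r) j = Ψ r i`: column `j` is column `i` rearranged by
`π`, and the assignment `r ↦ π r` has cost zero in the MDPA minimum.
-/

open NormedSpace

namespace Matrix

variable {l m n o R 𝔸 : Type*}

theorem submatrix_tsum_equiv [AddCommMonoid R] [TopologicalSpace R] [T2Space R] {X : Type*}
    (f : X → Matrix m n R) (e₁ : l ≃ m) (e₂ : o ≃ n) :
    (∑' x, f x).submatrix e₁ e₂ = ∑' x, (f x).submatrix e₁ e₂ :=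
  Function.LeftInverse.map_tsum f (g := reindexAddEquiv R e₁.symm e₂.symm)
    (continuous_id.matrix_submatrix _ _) (continuous_id.matrix_submatrix e₁.symm e₂.symm)
    fun M => by ext; simp

variable [Fintype m] [DecidableEq m] [Fintype n] [DecidableEq n]

theorem submatrix_pow_equiv [Semiring R] (A : Matrix m m R) (e : n ≃ m) (k : ℕ) :
    (A ^ k).submatrix e e = A.submatrix e e ^ k := by
  simpa only [coe_reindexAlgEquiv, reindex_apply, Equiv.symm_symm] using
    map_pow (reindexAlgEquiv ℕ R e.symm) A k

theorem exp_submatrix_equiv [Ring 𝔸] [TopologicalSpace 𝔸] [IsTopologicalRing 𝔸] [Algebra ℚ 𝔸]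
    [T2Space 𝔸] (A : Matrix m m 𝔸) (e : n ≃ m) :
    exp (A.submatrix e e) = (exp A).submatrix e e := by
  simp_rw [exp_eq_tsum_rat, submatrix_tsum_equiv, ← submatrix_pow_equiv]
  rfl

end Matrix

theorem MDPA_nonneg {V : Type*} [Fintype V] [DecidableEq V] (x y : V → ℝ) : 0 ≤ MDPA x y :=
  Finset.le_inf' _ _ fun _ _ => Finset.sum_nonneg fun _ _ => abs_nonneg _

theorem MDPA_eq_zero_of_comp_perm {V : Type*} [Fintype V] [DecidableEq V] {x y : V → ℝ}
    (σ : Equiv.Perm V) (h : ∀ r, y (σ r) = x r) : MDPA x y = 0 := by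
  refine le_antisymm ?_ (MDPA_nonneg x y)
  calc MDPA x y ≤ ∑ r, |x r - y (σ r)| := Finset.inf'_le _ (Finset.mem_univ σ)
    _ = 0 := by simp [h]

theorem automorphism_similarity_one_general {V : Type*} [Fintype V] [DecidableEq V]
    (τ : ℝ) (L : Matrix V V ℝ)
    (Ψ : Matrix V V ℝ) (hΨ : Ψ = NormedSpace.exp ((-τ) • L))
    (π : Equiv.Perm V) (hπ : ∀ r s, L (π r) (π s) = L r s)
    (i j : V) (hij : π i = j) :
    Multiset.map (fun r => Ψ r i) Finset.univ.val
        = Multiset.map (fun r => Ψ r j) Finset.univ.val ∧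
    MDPA (fun r => Ψ r i) (fun r => Ψ r j) = 0 ∧
    Real.exp (-(MDPA (fun r => Ψ r i) (fun r => Ψ r j))) = 1 := by
  have hL : ((-τ) • L).submatrix π π = (-τ) • L := by
    ext r s
    simp [hπ]
  have hΨπ : Ψ.submatrix π π = Ψ := by
    rw [hΨ, ← Matrix.exp_submatrix_equiv, hL]
  have hcol : ∀ r, Ψ (π r) j = Ψ r i := fun r => by
    rw [← hij]
    exact congrFun (congrFun hΨπ r) i
  have hmdpa := MDPA_eq_zero_of_comp_perm (x := fun r => Ψ r i) (y := fun r => Ψ r j) π hcol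
  refine ⟨?_, hmdpa, by rw [hmdpa, neg_zero, Real.exp_zero]⟩
  calc _ = Multiset.map ((fun r => Ψ r j) ∘ π) Finset.univ.val :=
        Multiset.map_congr rfl fun r _ => (hcol r).symm
    _ = _ := by rw [← Multiset.map_map, Multiset.map_univ_val_equiv]

/-- if nodes `i, j` are exchanged by a graph automorphism `π` (a
permutation preserving the Laplacian, with `π i = j`), then the multisets of wavelet
coefficients of the columns `Ψᵢ` and `Ψⱼ` of `Ψ = e^{-τL}` coincide, hence
`MDPA(Ψᵢ, Ψⱼ) = 0` and `s(vᵢ,vⱼ) = e⁰ = 1`. -/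
theorem automorphism_similarity_one {V : Type*} [Fintype V] [DecidableEq V]
    (τ : ℝ) (hτ : 0 < τ) (L : Matrix V V ℝ)
    (Ψ : Matrix V V ℝ) (hΨ : Ψ = NormedSpace.exp ((-τ) • L))
    (π : Equiv.Perm V) (hπ : ∀ r s, L (π r) (π s) = L r s)
    (i j : V) (hij : π i = j) :
    Multiset.map (fun r => Ψ r i) Finset.univ.val
        = Multiset.map (fun r => Ψ r j) Finset.univ.val ∧
    MDPA (fun r => Ψ r i) (fun r => Ψ r j) = 0 ∧
    Real.exp (-(MDPA (fun r => Ψ r i) (fun r => Ψ r j))) = 1 :=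
  automorphism_similarity_one_general τ L Ψ hΨ π hπ i j hij
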